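/- For any Boolean function f : {0,1}^n → {0,1}, the energy complexity of f satisfies EC(f) ≤ n + 2·D(f) − 2, where D(f) is the decision tree complexity of f. -/

import Mathlib

/-- A gate in a Boolean circuit over the standard basis `{∨₂, ∧₂, ¬}`:
input gates labelled by variables, constant gates, and `∧`/`∨`/`¬` gates
whose arguments are (indices of) earlier gates. -/
inductive Gate (n : ℕ) : Type where
  | input : Fin n → Gate n
  | const : Bool → Gate n
  | and : ℕ → ℕ → Gate n
  | or : ℕ → ℕ → Gate n
  | not : ℕ → Gate n
deriving DecidableEq

/-- The indices of the incoming gates of a gate. -/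
def Gate.deps {n : ℕ} : Gate n → List ℕ
  | .and a b => [a, b]
  | .or a b => [a, b]
  | .not a => [a]
  | _ => []

/-- Inner gates are the non-input (and non-constant) gates, i.e. `∧`, `∨`, `¬` gates. -/
def Gate.isInner {n : ℕ} : Gate n → Bool
  | .and _ _ => true
  | .or _ _ => true
  | .not _ => true
  | _ => false

/-- A Boolean circuit over the standard basis on `n` input variables: a sequence of
gates (topologically sorted, so each gate only takes earlier gates as inputs,
which makes the underlying graph acyclic) together with a designated output gate. -/
structure Circuit (n : ℕ) : Type where
  size : ℕ
  gates : Fin size → Gate n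
  out : Fin size
  wf : ∀ i : Fin size, ∀ j ∈ (gates i).deps, j < (i : ℕ)

/-- The Boolean value of gate `i` of circuit `C` under input `x`. -/
def Circuit.evalGate {n : ℕ} (C : Circuit n) (x : Fin n → Bool) (i : ℕ) (h : i < C.size) :
    Bool :=
  match hg : C.gates ⟨i, h⟩ with
  | .input j => x j
  | .const b => b
  | .not a =>
      have ha : a < i := C.wf ⟨i, h⟩ a (by rw [hg]; simp [Gate.deps])
      ! C.evalGate x a (ha.trans h)
  | .and a b =>
      have ha : a < i := C.wf ⟨i, h⟩ a (by rw [hg]; simp [Gate.deps])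
      have hb : b < i := C.wf ⟨i, h⟩ b (by rw [hg]; simp [Gate.deps])
      C.evalGate x a (ha.trans h) && C.evalGate x b (hb.trans h)
  | .or a b =>
      have ha : a < i := C.wf ⟨i, h⟩ a (by rw [hg]; simp [Gate.deps])
      have hb : b < i := C.wf ⟨i, h⟩ b (by rw [hg]; simp [Gate.deps])
      C.evalGate x a (ha.trans h) || C.evalGate x b (hb.trans h)
termination_by i

/-- The output of circuit `C` on input `x`. -/
def Circuit.output {n : ℕ} (C : Circuit n) (x : Fin n → Bool) : Bool :=
  C.evalGate x C.out C.out.isLt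

/-- `C` computes the Boolean function `f`. -/
def Circuit.Computes {n : ℕ} (C : Circuit n) (f : (Fin n → Bool) → Bool) : Prop :=
  ∀ x, C.output x = f x

/-- The number of activated inner gates of `C` under input `x`. -/
def Circuit.energyAt {n : ℕ} (C : Circuit n) (x : Fin n → Bool) : ℕ :=
  (Finset.univ.filter fun i : Fin C.size =>
    (C.gates i).isInner = true ∧ C.evalGate x i i.isLt = true).card

/-- The energy complexity `EC(C)` of a circuit `C`: the maximum number of
activated inner gates over all inputs. -/
def Circuit.energy {n : ℕ} (C : Circuit n) : ℕ :=
  Finset.univ.sup fun x : Fin n → Bool => C.energyAt x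

/-- The energy complexity `EC(f)` of a Boolean function `f`: the minimum of `EC(C)`
over all circuits `C` computing `f`. -/
noncomputable def EC {n : ℕ} (f : (Fin n → Bool) → Bool) : ℕ :=
  sInf {k | ∃ C : Circuit n, C.Computes f ∧ C.energy = k}

/-- A deterministic decision tree on `n` Boolean variables: internal nodes query a
variable (left child on `0`, right child on `1`) and leaves are labelled `0`/`1`. -/
inductive DTree (n : ℕ) : Type where
  | leaf : Bool → DTree n
  | node : Fin n → DTree n → DTree n → DTree n

/-- Evaluation of a decision tree on an input. -/
def DTree.eval {n : ℕ} : DTree n → (Fin n → Bool) → Bool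
  | .leaf b, _ => b
  | .node i t0 t1, x => if x i then t1.eval x else t0.eval x

/-- The depth of a decision tree (number of queries on a worst-case input). -/
def DTree.depth {n : ℕ} : DTree n → ℕ
  | .leaf _ => 0
  | .node _ t0 t1 => max t0.depth t1.depth + 1

/-- The decision tree complexity `D(f)`: the minimum depth of a decision tree
computing `f`. -/
noncomputable def Dcomp {n : ℕ} (f : (Fin n → Bool) → Bool) : ℕ :=
  sInf {k | ∃ T : DTree n, (∀ x, T.eval x = f x) ∧ T.depth = k}

/-!
Take a decision tree of depth `d = D(f)` in which no node has two equal leaves as children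
(merging such leaves never increases the depth). The circuit consists of the `n` inputs and their `n` negations, for every node `v` below depth one an
AND gate "x reaches v" built from the gate of the parent of `v` and a literal (the children of the
root use the literals themselves), and OR gates collecting the gates of the `1`-leaves bottom-up
along the tree. On input `x`, besides at most `n` negations, only gates on the path of `x` fire:
at most `d - 1` AND gates, and OR gates only if `f x = 1`. In that case there are at most `d - 1`
of them: if the path ends at a `1`-leaf whose sibling is a leaf, the sibling is a `0`-leaf and
contributes no OR gate; otherwise the path is shorter than `d`.
-/

namespace Gate

variable {n : ℕ}

def eval (x : Fin n → Bool) (v : ℕ → Bool) : Gate n → Bool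
  | .input j => x j
  | .const b => b
  | .not a => !v a
  | .and a b => v a && v b
  | .or a b => v a || v b

theorem eval_congr (g : Gate n) (x : Fin n → Bool) {v w : ℕ → Bool}
    (h : ∀ k ∈ g.deps, v k = w k) : g.eval x v = g.eval x w := by
  cases g <;> simp_all [eval, deps]

end Gate

namespace GateList

variable {n : ℕ}

def values (x : Fin n → Bool) (L : List (Gate n)) : List Bool :=
  L.foldl (fun vs g => vs ++ [g.eval x (vs.getD · false)]) []

def value (x : Fin n → Bool) (L : List (Gate n)) (i : ℕ) : Bool :=
  (values x L).getD i false

theorem values_concat (x : Fin n → Bool) (L : List (Gate n)) (g : Gate n) :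
    values x (L ++ [g]) = values x L ++ [g.eval x (value x L)] := by
  simp only [values, List.foldl_append, List.foldl_cons, List.foldl_nil]
  rfl

theorem length_values (x : Fin n → Bool) (L : List (Gate n)) : (values x L).length = L.length := by
  induction L using List.reverseRecOn with
  | nil => rfl
  | append_singleton L g ih => simp [values_concat, ih]

theorem values_prefix (x : Fin n → Bool) {L L' : List (Gate n)} (h : L <+: L') :
    values x L <+: values x L' := by
  obtain ⟨M, rfl⟩ := h
  induction M using List.reverseRecOn with
  | nil => simp
  | append_singleton M g ih =>
    rw [← List.append_assoc, values_concat]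
    exact ih.trans (List.prefix_append _ _)

theorem value_of_prefix (x : Fin n → Bool) {L L' : List (Gate n)} (h : L <+: L') {i : ℕ}
    (hi : i < L.length) : value x L' i = value x L i := by
  obtain ⟨vs, hvs⟩ := values_prefix x h
  rw [value, ← hvs, List.getD_append _ _ _ _ (by rwa [length_values]), value]

theorem value_concat_length (x : Fin n → Bool) (L : List (Gate n)) (g : Gate n) :
    value x (L ++ [g]) L.length = g.eval x (value x L) := by
  simp [value, values_concat, length_values]

def WellFormed (L : List (Gate n)) : Prop :=
  ∀ i (h : i < L.length), ∀ k ∈ L[i].deps, k < i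

theorem WellFormed.concat {L : List (Gate n)} (hL : WellFormed L) {g : Gate n}
    (hg : ∀ k ∈ g.deps, k < L.length) : WellFormed (L ++ [g]) := by
  intro i hi k hk
  rcases Nat.lt_or_ge i L.length with h | h
  · rw [List.getElem_append_left h] at hk
    exact hL i h k hk
  · obtain rfl : i = L.length := by simp at hi; omega
    simp at hk
    exact hg k hk

theorem value_eq_eval (x : Fin n → Bool) {L : List (Gate n)} (hL : WellFormed L) {i : ℕ}
    (hi : i < L.length) : value x L i = L[i].eval x (value x L) := by
  have hlen : (L.take i).length = i := List.length_take_of_le hi.le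
  calc value x L i = value x (L.take i ++ [L[i]]) (L.take i).length := by
        rw [List.take_append_getElem hi, hlen,
          value_of_prefix x (List.take_prefix (i + 1) L) (by simpa)]
    _ = L[i].eval x (value x (L.take i)) := value_concat_length x _ _
    _ = L[i].eval x (value x L) := Gate.eval_congr _ _ fun k hk =>
        (value_of_prefix x (List.take_prefix _ _) (by rw [hlen]; exact hL i hi k hk)).symm

def isActive (x : Fin n → Bool) (L : List (Gate n)) (i : ℕ) : Bool :=
  L[i]?.any Gate.isInner && value x L i

def activeCount (x : Fin n → Bool) (L : List (Gate n)) : ℕ :=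
  ((Finset.range L.length).filter (isActive x L ·)).card

theorem activeCount_concat (x : Fin n → Bool) (L : List (Gate n)) (g : Gate n) :
    activeCount x (L ++ [g]) =
      activeCount x L + if g.isInner && g.eval x (value x L) then 1 else 0 := by
  have hold : ∀ i ∈ Finset.range L.length, isActive x (L ++ [g]) i = isActive x L i := by
    intro i hi
    rw [Finset.mem_range] at hi
    rw [isActive, isActive, List.getElem?_append_left hi,
      value_of_prefix x (List.prefix_append L [g]) hi]
  have hnew : isActive x (L ++ [g]) L.length = (g.isInner && g.eval x (value x L)) := by
    simp [isActive, value_concat_length]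
  rw [activeCount, activeCount, List.length_append, List.length_singleton, Finset.range_add_one,
    Finset.filter_insert, Finset.filter_congr fun i hi => by rw [hold i hi]]
  rw [hnew]
  split_ifs
  · exact Finset.card_insert_of_notMem (by simp)
  · rfl

def toCircuit (L : List (Gate n)) (hL : WellFormed L) (o : ℕ) (ho : o < L.length) :
    Circuit n where
  size := L.length
  gates i := L[i]
  out := ⟨o, ho⟩
  wf i := hL i i.isLt

theorem evalGate_toCircuit (x : Fin n → Bool) {L : List (Gate n)} (hL : WellFormed L) {o : ℕ}
    (ho : o < L.length) (i : ℕ) (hi : i < (toCircuit L hL o ho).size) :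
    (toCircuit L hL o ho).evalGate x i hi = value x L i := by
  induction i using Nat.strong_induction_on with
  | _ i ih =>
    rw [Circuit.evalGate.eq_1, value_eq_eval x hL hi]
    have hdeps := hL i hi
    split <;> rename_i hg <;> replace hg : L[i] = _ := hg <;>
      simp only [hg, Gate.eval, Gate.deps] at hdeps ⊢ <;> simp_all

theorem energyAt_toCircuit (x : Fin n → Bool) {L : List (Gate n)} (hL : WellFormed L) {o : ℕ}
    (ho : o < L.length) : (toCircuit L hL o ho).energyAt x = activeCount x L := by
  rw [Circuit.energyAt, activeCount, Finset.card_filter, Finset.card_filter,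
    ← Fin.sum_univ_eq_sum_range (fun i => if isActive x L i then 1 else 0)]
  congr 1
  funext i
  have hi : (i : ℕ) < L.length := i.isLt
  rw [evalGate_toCircuit]
  simp [isActive, toCircuit, List.getElem?_eq_getElem hi]
  congr

theorem output_toCircuit (x : Fin n → Bool) {L : List (Gate n)} (hL : WellFormed L) {o : ℕ}
    (ho : o < L.length) : (toCircuit L hL o ho).output x = value x L o :=
  evalGate_toCircuit x hL ho o ho

theorem exists_circuit_of_wellFormed {L : List (Gate n)} (hL : WellFormed L) (o : Option ℕ)
    (ho : ∀ i ∈ o, i < L.length) :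
    ∃ C : Circuit n, (∀ x, C.output x = o.any (value x L)) ∧
      ∀ x, C.energyAt x = activeCount x L := by
  cases o with
  | some o =>
    exact ⟨toCircuit L hL o (ho o rfl), fun x => output_toCircuit x hL _,
      fun x => energyAt_toCircuit x hL _⟩
  | none =>
    refine ⟨toCircuit (L ++ [.const false]) (hL.concat (by simp [Gate.deps])) L.length (by simp),
      fun x => ?_, fun x => ?_⟩
    · rw [output_toCircuit, value_concat_length]
      rfl
    · rw [energyAt_toCircuit, activeCount_concat]
      rfl

def literals (n : ℕ) : List (Gate n) :=
  List.ofFn Gate.input ++ List.ofFn fun j : Fin n => Gate.not j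

theorem length_literals : (literals n).length = 2 * n := by
  simp [literals]; omega

theorem getElem_literals_input (j : Fin n) :
    (literals n)[(j : ℕ)]'(by rw [length_literals]; omega) = .input j := by
  simp [literals, List.getElem_append_left]

theorem getElem_literals_not (j : Fin n) :
    (literals n)[n + j]'(by rw [length_literals]; omega) = .not j := by
  simp [literals, List.getElem_append_right]

theorem wellFormed_literals : WellFormed (literals n) := by
  intro i hi k hk
  rcases Nat.lt_or_ge i n with h | h
  · simp [getElem_literals_input ⟨i, h⟩, Gate.deps] at hk
  · obtain ⟨j, rfl⟩ := Nat.exists_eq_add_of_le h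
    have hj : j < n := by rw [length_literals] at hi; omega
    simp [getElem_literals_not ⟨j, hj⟩, Gate.deps] at hk
    omega

theorem value_literal_input (x : Fin n → Bool) {L : List (Gate n)} (hL : literals n <+: L)
    (j : Fin n) :
    value x L j = x j := by
  have hj : (j : ℕ) < (literals n).length := by rw [length_literals]; omega
  rw [value_of_prefix x hL hj, value_eq_eval x wellFormed_literals hj, getElem_literals_input]
  rfl

theorem value_literal_not (x : Fin n → Bool) {L : List (Gate n)} (hL : literals n <+: L)
    (j : Fin n) :
    value x L (n + j) = !x j := by
  have hj : n + j < (literals n).length := by rw [length_literals]; omega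
  rw [value_of_prefix x hL hj, value_eq_eval x wellFormed_literals hj, getElem_literals_not,
    Gate.eval, value_literal_input x (List.prefix_refl _)]

theorem activeCount_literals_le (x : Fin n → Bool) : activeCount x (literals n) ≤ n := by
  have hsub : (Finset.range (literals n).length).filter (isActive x (literals n) ·) ⊆
      Finset.Ico n (2 * n) := by
    intro i hi
    rw [Finset.mem_filter, Finset.mem_range] at hi
    have hi' : i < 2 * n := length_literals (n := n) ▸ hi.1
    refine Finset.mem_Ico.mpr ⟨Nat.le_of_not_lt fun h => ?_, hi'⟩
    simpa [isActive, List.getElem?_eq_getElem hi.1, getElem_literals_input ⟨i, h⟩, Gate.isInner]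
      using hi.2
  have := Finset.card_le_card hsub
  rw [Nat.card_Ico] at this
  exact this.trans (by omega)

end GateList

namespace DTree

variable {n : ℕ}

def Reduced : DTree n → Prop
  | .leaf _ => True
  | .node _ t₀ t₁ => t₀.Reduced ∧ t₁.Reduced ∧ ∀ b, ¬(t₀ = .leaf b ∧ t₁ = .leaf b)

def mkNode (i : Fin n) : DTree n → DTree n → DTree n
  | .leaf b₀, .leaf b₁ => if b₀ = b₁ then .leaf b₀ else .node i (.leaf b₀) (.leaf b₁)
  | t₀, t₁ => .node i t₀ t₁

theorem eval_mkNode (i : Fin n) (t₀ t₁ : DTree n) (x : Fin n → Bool) :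
    (mkNode i t₀ t₁).eval x = (node i t₀ t₁).eval x := by
  unfold mkNode
  split
  · split_ifs with h
    · subst h; simp [eval]
    · rfl
  · rfl

theorem depth_mkNode_le (i : Fin n) (t₀ t₁ : DTree n) :
    (mkNode i t₀ t₁).depth ≤ (node i t₀ t₁).depth := by
  unfold mkNode
  split
  · split_ifs <;> simp [depth]
  · rfl

theorem reduced_mkNode (i : Fin n) {t₀ t₁ : DTree n} (h₀ : t₀.Reduced) (h₁ : t₁.Reduced) :
    (mkNode i t₀ t₁).Reduced := by
  unfold mkNode
  split
  · split_ifs with h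
    · trivial
    · exact ⟨trivial, trivial, by rintro b ⟨⟨⟩, ⟨⟩⟩; exact h rfl⟩
  · refine ⟨h₀, h₁, fun b ⟨hb₀, hb₁⟩ => ?_⟩
    subst hb₀ hb₁
    simp_all

def reduce : DTree n → DTree n
  | .leaf b => .leaf b
  | .node i t₀ t₁ => mkNode i t₀.reduce t₁.reduce

theorem eval_reduce (t : DTree n) (x : Fin n → Bool) : t.reduce.eval x = t.eval x := by
  induction t with
  | leaf b => rfl
  | node i t₀ t₁ ih₀ ih₁ => simp [reduce, eval_mkNode, eval, ih₀, ih₁]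

theorem depth_reduce_le (t : DTree n) : t.reduce.depth ≤ t.depth := by
  induction t with
  | leaf b => rfl
  | node i t₀ t₁ ih₀ ih₁ =>
    refine (depth_mkNode_le i _ _).trans ?_
    simp only [depth]
    omega

theorem reduced_reduce (t : DTree n) : t.reduce.Reduced := by
  induction t with
  | leaf b => trivial
  | node i t₀ t₁ ih₀ ih₁ => exact reduced_mkNode i ih₀ ih₁

def queryAll : List (Fin n) → ((Fin n → Bool) → Bool) → DTree n
  | [], g => .leaf (g fun _ => false)
  | i :: l, g =>
    .node i (queryAll l fun x => g (Function.update x i false))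
      (queryAll l fun x => g (Function.update x i true))

theorem eval_queryAll (l : List (Fin n)) (g : (Fin n → Bool) → Bool)
    (hg : ∀ x y, (∀ i ∈ l, x i = y i) → g x = g y) (x : Fin n → Bool) :
    (queryAll l g).eval x = g x := by
  induction l generalizing g with
  | nil => exact hg _ _ (by simp)
  | cons i l ih =>
    have hupd : ∀ b, (queryAll l fun y => g (Function.update y i b)).eval x =
        g (Function.update x i b) := fun b => ih _ fun y z hyz => hg _ _ fun k hk => by
        rcases eq_or_ne k i with rfl | hki
        · simp
        · simp [hki, hyz k ((List.mem_cons.mp hk).resolve_left hki)]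
    calc (queryAll (i :: l) g).eval x
        = (queryAll l fun y => g (Function.update y i (x i))).eval x := by
          simp only [queryAll, eval]; cases x i <;> rfl
      _ = g x := by rw [hupd, Function.update_eq_self]

theorem exists_depth_eq_Dcomp (f : (Fin n → Bool) → Bool) :
    ∃ T : DTree n, (∀ x, T.eval x = f x) ∧ T.depth = Dcomp f := by
  have hne : {k | ∃ T : DTree n, (∀ x, T.eval x = f x) ∧ T.depth = k}.Nonempty :=
    ⟨_, queryAll (List.finRange n) f,
      eval_queryAll _ f fun x y h => congrArg f (funext fun i => h i (List.mem_finRange i)), rfl⟩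
  exact Nat.sInf_mem hne

def energyBound (t : DTree n) (x : Fin n → Bool) : ℕ :=
  if t.eval x then 2 * t.depth - 1 else t.depth

theorem energyBound_add_le {s s' : DTree n} (hss' : ¬(s = .leaf true ∧ s' = .leaf true))
    {c : Bool} (hc : c → s' ≠ .leaf false) (x : Fin n → Bool) :
    s.energyBound x + (if c && s.eval x then 1 else 0) ≤
      if s.eval x then 2 * max s.depth s'.depth else max s.depth s'.depth := by
  cases s with
  | leaf b =>
    cases b
    · simp [energyBound, eval]
    · cases c
      · simp [energyBound, eval, depth]
      · cases s' with
        | leaf b' => cases b' <;> simp_all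
        | node => simp [energyBound, eval, depth]; omega
  | node j s₀ s₁ =>
    have : 1 ≤ (node j s₀ s₁).depth := by simp [depth]
    unfold energyBound
    split_ifs <;> simp_all <;> omega

theorem energyBound_node_sub_one (j : Fin n) (t₀ t₁ : DTree n) (x : Fin n → Bool) :
    (node j t₀ t₁).energyBound x - 1 =
      if (node j t₀ t₁).eval x then 2 * max t₀.depth t₁.depth else max t₀.depth t₁.depth := by
  simp only [energyBound, depth]
  split <;> omega

/-- Reducedness enters only here: if the path of `x` ends in a `1`-leaf whose sibling is a leaf,
that sibling is a `0`-leaf, whose compilation has no output, so no OR gate is spent. -/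
theorem energyBound_branch_le {j : Fin n} {t₀ t₁ : DTree n} (ht : (node j t₀ t₁).Reduced)
    {c₀ c₁ : Bool} (hc₀ : c₀ → t₀ ≠ .leaf false) (hc₁ : c₁ → t₁ ≠ .leaf false)
    (x : Fin n → Bool) :
    (if x j then t₁.energyBound x else t₀.energyBound x) +
        (if c₀ && c₁ && (node j t₀ t₁).eval x then 1 else 0) ≤
      (node j t₀ t₁).energyBound x - 1 := by
  obtain ⟨-, -, hne⟩ := ht
  rw [energyBound_node_sub_one]
  cases hx : x j
  · have key := energyBound_add_le (fun h => hne true ⟨h.1, h.2⟩) hc₁ x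
    simp only [eval, hx] at key ⊢
    revert key
    cases t₀.eval x <;> cases c₀ <;> cases c₁ <;> grind
  · have key := energyBound_add_le (fun h => hne true ⟨h.2, h.1⟩) hc₀ x
    simp only [eval, hx, max_comm t₁.depth] at key ⊢
    revert key
    cases t₁.eval x <;> cases c₀ <;> cases c₁ <;> grind

end DTree

namespace GateList

variable {n : ℕ}

def joinOr (L : List (Gate n)) : Option ℕ → Option ℕ → List (Gate n) × Option ℕ
  | some o₀, some o₁ => (L ++ [.or o₀ o₁], some L.length)
  | some o₀, none => (L, some o₀)
  | none, o₁ => (L, o₁)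

section joinOr

variable {L : List (Gate n)} {o₀ o₁ : Option ℕ}

theorem prefix_joinOr : L <+: (joinOr L o₀ o₁).1 := by
  rcases o₀ with _ | o₀ <;> rcases o₁ with _ | o₁ <;> simp [joinOr]

theorem wellFormed_joinOr (hL : WellFormed L) (h₀ : ∀ o ∈ o₀, o < L.length)
    (h₁ : ∀ o ∈ o₁, o < L.length) : WellFormed (joinOr L o₀ o₁).1 := by
  rcases o₀ with _ | o₀ <;> rcases o₁ with _ | o₁ <;> try exact hL
  exact hL.concat (by simp_all [Gate.deps])

theorem joinOr_lt (h₀ : ∀ o ∈ o₀, o < L.length) (h₁ : ∀ o ∈ o₁, o < L.length) :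
    ∀ o ∈ (joinOr L o₀ o₁).2, o < (joinOr L o₀ o₁).1.length := by
  rcases o₀ with _ | o₀ <;> rcases o₁ with _ | o₁ <;> simp_all [joinOr]

theorem any_value_joinOr (x : Fin n → Bool) (h₀ : ∀ o ∈ o₀, o < L.length)
    (h₁ : ∀ o ∈ o₁, o < L.length) :
    (joinOr L o₀ o₁).2.any (value x (joinOr L o₀ o₁).1) =
      (o₀.any (value x L) || o₁.any (value x L)) := by
  rcases o₀ with _ | o₀ <;> rcases o₁ with _ | o₁ <;>
    simp_all [joinOr, value_concat_length, Gate.eval]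

theorem activeCount_joinOr_le (x : Fin n → Bool) :
    activeCount x (joinOr L o₀ o₁).1 ≤ activeCount x L +
      if o₀.isSome && o₁.isSome && (o₀.any (value x L) || o₁.any (value x L)) then 1 else 0 := by
  rcases o₀ with _ | o₀ <;> rcases o₁ with _ | o₁ <;>
    simp [joinOr, activeCount_concat, Gate.isInner, Gate.eval]

end joinOr

def compileBranches (c₀ c₁ : ℕ → List (Gate n) → List (Gate n) × Option ℕ) (r₀ r₁ : ℕ)
    (L : List (Gate n)) : List (Gate n) × Option ℕ :=
  let p₀ := c₀ r₀ L
  let p₁ := c₁ r₁ p₀.1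
  joinOr p₁.1 p₀.2 p₁.2

end GateList

/-- `t.compile a L` appends to `L` gates computing `value a ∧ t`, where gate `a` computes whether
the input reaches the root of `t`; the output `none` stands for the constant `false`. -/
def DTree.compile {n : ℕ} : DTree n → ℕ → List (Gate n) → List (Gate n) × Option ℕ
  | .leaf b, a, L => (L, if b then some a else none)
  | .node j t₀ t₁, a, L =>
    GateList.compileBranches t₀.compile t₁.compile L.length (L.length + 1)
      (L ++ [.and a (n + j)] ++ [.and a j])

namespace GateList

variable {n : ℕ}

structure Implements (L : List (Gate n)) (guard : (Fin n → Bool) → Bool) (t : DTree n)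
    (cost : (Fin n → Bool) → ℕ) (p : List (Gate n) × Option ℕ) : Prop where
  isPrefix : L <+: p.1
  wellFormed : WellFormed p.1
  out_lt : ∀ o ∈ p.2, o < p.1.length
  out_value : ∀ x, p.2.any (value x p.1) = (guard x && t.eval x)
  activeCount_le : ∀ x, activeCount x p.1 ≤ activeCount x L + if guard x then cost x else 0

def CompilesCorrectly (t : DTree n) : Prop :=
  ∀ a (L : List (Gate n)), WellFormed L → literals n <+: L → a < L.length →
    Implements L (value · L a) t t.energyBound (t.compile a L)

theorem compileBranches_implements {j : Fin n} {t₀ t₁ : DTree n}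
    (ht : (DTree.node j t₀ t₁).Reduced) (ih₀ : CompilesCorrectly t₀)
    (ih₁ : CompilesCorrectly t₁) (guard : (Fin n → Bool) → Bool) {r₀ r₁ : ℕ}
    {L : List (Gate n)} (hL : WellFormed L) (hlit : literals n <+: L) (hr₀ : r₀ < L.length)
    (hr₁ : r₁ < L.length) (hv₀ : ∀ x, value x L r₀ = (guard x && !x j))
    (hv₁ : ∀ x, value x L r₁ = (guard x && x j)) :
    Implements L guard (.node j t₀ t₁) (fun x => (DTree.node j t₀ t₁).energyBound x - 1)
      (compileBranches t₀.compile t₁.compile r₀ r₁ L) := by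
  have S₀ := ih₀ r₀ L hL hlit hr₀
  rw [compileBranches]
  generalize hp₀ : t₀.compile r₀ L = p₀ at S₀ ⊢
  have hr₁' : r₁ < p₀.1.length := hr₁.trans_le S₀.isPrefix.length_le
  have S₁ := ih₁ r₁ p₀.1 S₀.wellFormed (hlit.trans S₀.isPrefix) hr₁'
  generalize hp₁ : t₁.compile r₁ p₀.1 = p₁ at S₁ ⊢
  have hlt₀ : ∀ o ∈ p₀.2, o < p₁.1.length :=
    fun o ho => (S₀.out_lt o ho).trans_le S₁.isPrefix.length_le
  have hout₀ : ∀ x, p₀.2.any (value x p₁.1) = (guard x && !x j && t₀.eval x) := by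
    intro x
    rw [← hv₀, ← S₀.out_value]
    rcases h : p₀.2 with _ | o
    · rfl
    · exact value_of_prefix x S₁.isPrefix (S₀.out_lt o h)
  have hout₁ : ∀ x, p₁.2.any (value x p₁.1) = (guard x && x j && t₁.eval x) := by
    intro x
    rw [S₁.out_value, value_of_prefix x S₀.isPrefix hr₁, hv₁]
  refine ⟨S₀.isPrefix.trans (S₁.isPrefix.trans prefix_joinOr),
    wellFormed_joinOr S₁.wellFormed hlt₀ S₁.out_lt, joinOr_lt hlt₀ S₁.out_lt,
    fun x => ?_, fun x => ?_⟩
  · rw [any_value_joinOr x hlt₀ S₁.out_lt, hout₀, hout₁]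
    cases guard x <;> cases hx : x j <;> simp [DTree.eval, hx]
  · have hc₀ : p₀.2.isSome → t₀ ≠ .leaf false := by
      rintro h rfl; simp [← hp₀, DTree.compile] at h
    have hc₁ : p₁.2.isSome → t₁ ≠ .leaf false := by
      rintro h rfl; simp [← hp₁, DTree.compile] at h
    have A₀ := S₀.activeCount_le x
    have A₁ := S₁.activeCount_le x
    have J := activeCount_joinOr_le x (L := p₁.1) (o₀ := p₀.2) (o₁ := p₁.2)
    have key := DTree.energyBound_branch_le ht hc₀ hc₁ x
    rw [hv₀] at A₀
    rw [value_of_prefix x S₀.isPrefix hr₁, hv₁] at A₁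
    rw [hout₀, hout₁] at J
    cases hg : guard x <;> cases hx : x j <;> simp [hg, hx, DTree.eval] at A₀ A₁ J key ⊢ <;> omega

theorem compilesCorrectly_of_reduced {t : DTree n} (ht : t.Reduced) : CompilesCorrectly t := by
  induction t with
  | leaf b =>
    intro a L hL _ ha
    refine ⟨List.prefix_refl L, hL, fun o ho => ?_, fun x => ?_, fun x => ?_⟩
    · cases b <;> simp_all [DTree.compile]
    · cases b <;> simp [DTree.compile, DTree.eval]
    · simp [DTree.compile]
  | node j t₀ t₁ ih₀ ih₁ =>
    intro a L hL hlit ha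
    have hj : n + j < L.length := by
      have := hlit.length_le
      rw [length_literals] at this
      omega
    set L' : List (Gate n) := L ++ [.and a (n + j)] ++ [.and a j]
    have hL' : WellFormed L' :=
      (hL.concat (by simp [Gate.deps]; omega)).concat (by simp [Gate.deps]; omega)
    have hpre : L <+: L' := by simp [L', List.append_assoc]
    have hv₀ : ∀ x, value x L' L.length = (value x L a && !x j) := fun x => by
      rw [value_of_prefix x (List.prefix_append _ _) (by simp), value_concat_length, Gate.eval,
        value_literal_not x hlit]
    have hv₁ : ∀ x, value x L' (L.length + 1) = (value x L a && x j) := fun x => by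
      rw [show L.length + 1 = (L ++ [Gate.and a (n + j)]).length by simp, value_concat_length,
        Gate.eval, value_of_prefix x (List.prefix_append _ _) ha,
        value_literal_input x (hlit.trans (List.prefix_append _ _))]
    have B := compileBranches_implements ht (ih₀ ht.1) (ih₁ ht.2.1) (value · L a) hL'
      (hlit.trans hpre) (by simp [L']) (by simp [L']) hv₀ hv₁
    have hact : ∀ x, activeCount x L' = activeCount x L + if value x L a then 1 else 0 := by
      intro x
      simp only [L', activeCount_concat, Gate.isInner, Gate.eval, Bool.true_and,
        value_of_prefix x (List.prefix_append _ _) ha,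
        value_of_prefix x (List.prefix_append _ _) (show j < L.length by omega),
        value_literal_not x hlit, value_literal_input x hlit]
      cases value x L a <;> cases x j <;> simp
    have hE : ∀ x, 1 ≤ (DTree.node j t₀ t₁).energyBound x := by
      intro x; simp only [DTree.energyBound, DTree.depth]; split <;> omega
    refine ⟨hpre.trans B.isPrefix, B.wellFormed, B.out_lt, B.out_value, fun x => ?_⟩
    have hB := B.activeCount_le x
    have hEx := hE x
    rw [hact] at hB
    change activeCount x (compileBranches t₀.compile t₁.compile L.length (L.length + 1) L').1 ≤ _
    split_ifs at hB ⊢ <;> omega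

end GateList

open GateList in
theorem DTree.exists_circuit {n : ℕ} {t : DTree n} (ht : t.Reduced) :
    ∃ C : Circuit n, (∀ x, C.output x = t.eval x) ∧ ∀ x, C.energyAt x ≤ n + 2 * t.depth - 2 := by
  cases t with
  | leaf b =>
    have hL : WellFormed ([.const b] : List (Gate n)) := fun i hi k hk => by
      simp [Gate.deps] at hk
    obtain ⟨C, hC, hE⟩ := exists_circuit_of_wellFormed hL (some 0) (by simp)
    refine ⟨C, fun x => ?_, fun x => ?_⟩
    · rw [hC]
      exact value_concat_length x [] _
    · rw [hE]
      exact (activeCount_concat x [] _).trans_le (by simp [activeCount, Gate.isInner])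
  | node j t₀ t₁ =>
    have hr : ∀ k : Fin n, k < (literals n).length ∧ n + k < (literals n).length := fun k => by
      rw [length_literals]; omega
    have B := compileBranches_implements ht (compilesCorrectly_of_reduced ht.1)
      (compilesCorrectly_of_reduced ht.2.1) (fun _ => true) wellFormed_literals
      (List.prefix_refl _) (hr j).2 (hr j).1
      (fun x => by simp [value_literal_not x (List.prefix_refl _)])
      (fun x => by simp [value_literal_input x (List.prefix_refl _)])
    obtain ⟨C, hC, hE⟩ := exists_circuit_of_wellFormed B.wellFormed _ B.out_lt
    refine ⟨C, fun x => by rw [hC, B.out_value]; rfl, fun x => ?_⟩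
    have hB := B.activeCount_le x
    have hlit := activeCount_literals_le x
    have hd : 1 ≤ (node j t₀ t₁).depth := by simp [depth]
    rw [hE]
    simp only [if_true, energyBound] at hB
    split_ifs at hB <;> omega

/-- For any Boolean function `f : {0,1}^n → {0,1}`,
`EC(f) ≤ n + 2·D(f) − 2`. -/
theorem stmt0 (n : ℕ) (f : (Fin n → Bool) → Bool) :
    EC f ≤ n + 2 * Dcomp f - 2 := by
  obtain ⟨T, hT, hdepth⟩ := DTree.exists_depth_eq_Dcomp f
  obtain ⟨C, hC, hE⟩ := DTree.exists_circuit T.reduced_reduce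
  have hcomp : C.Computes f := fun x => by rw [hC, DTree.eval_reduce, hT]
  have hEC : EC f ≤ C.energy := Nat.sInf_le ⟨C, hcomp, rfl⟩
  refine hEC.trans (Finset.sup_le fun x _ => (hE x).trans ?_)
  have := T.depth_reduce_le
  omega
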